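/- arXiv:1703.06721 — 6 statements merged into one kernel-verified Lean document; each statement's English description precedes it below -/
import Mathlib

section
/- Let D > 0 and consider the characteristic equation λ - (A/τ_max)·∫₀^{τ_max} exp(-λτ) dτ = 0 with A = -D, arising from uniformly distributed delays on [0, τ_max]. Then λ = i·w₀ with w₀ = π/τ_cr is a root when τ_max = τ_cr = π²/(2D). -/
/-!
When `wT = π` we have `e^{-iwT} = -1`, so `∫₀ᵀ e^{-iwτ} dτ = (1 - e^{-iwT})/(iw) = 2/(iw)` and the
characteristic equation at `λ = iw` collapses to the real condition `w²T = -2A = 2D`. For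
`T = π²/(2D)` and `w = π/T` this is `π²/T = 2D`.
-/

open Complex

/-- The characteristic function `λ ↦ λ - (A/T) ∫₀ᵀ e^{-λτ} dτ` of `x' = (A/T) ∫₀ᵀ x(t - τ) dτ`. -/
noncomputable def uniformDelayCharFun (A T : ℝ) (μ : ℂ) : ℂ :=
  μ - (A / T : ℂ) * ∫ τ in (0:ℝ)..T, exp (-μ * τ)

theorem integral_exp_neg_I_mul_of_mul_eq_pi {w T : ℝ} (hwT : w * T = Real.pi) :
    ∫ τ in (0:ℝ)..T, exp (-(I * w) * τ) = 2 / (I * w) := by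
  have hw : (w : ℂ) ≠ 0 := ofReal_ne_zero.2 (left_ne_zero_of_mul (hwT ▸ Real.pi_ne_zero))
  have hexp : exp (-(I * w) * T) = -1 := by
    rw [show -(I * w) * T = -((w * T : ℝ) * I) by push_cast; ring, hwT, exp_neg, exp_pi_mul_I]
    norm_num
  rw [integral_exp_mul_complex (neg_ne_zero.2 (mul_ne_zero I_ne_zero hw)), hexp]
  field_simp
  norm_num

theorem uniformDelayCharFun_I_mul_eq_zero {A T w : ℝ} (hwT : w * T = Real.pi)
    (hA : w ^ 2 * T = -2 * A) : uniformDelayCharFun A T (I * w) = 0 := by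
  have hw : (w : ℂ) ≠ 0 := ofReal_ne_zero.2 (left_ne_zero_of_mul (hwT ▸ Real.pi_ne_zero))
  have hT : (T : ℂ) ≠ 0 := ofReal_ne_zero.2 (right_ne_zero_of_mul (hwT ▸ Real.pi_ne_zero))
  have hA' : (w : ℂ) ^ 2 * T = -2 * A := by exact_mod_cast hA
  rw [uniformDelayCharFun, integral_exp_neg_I_mul_of_mul_eq_pi hwT, sub_eq_zero]
  field_simp
  linear_combination (w : ℂ) ^ 2 * T * I_sq - hA'

theorem uniform_imaginary_root (D : ℝ) (hD : 0 < D) (A : ℝ) (hA : A = -D)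
    (τcr : ℝ) (hτ : τcr = Real.pi ^ 2 / (2 * D)) (w₀ : ℝ) (hw : w₀ = Real.pi / τcr) :
    Complex.I * w₀ -
      ((A : ℂ) / τcr) * ∫ τ in (0:ℝ)..τcr, Complex.exp (-(Complex.I * w₀) * τ) = 0 := by
  have hτpos : 0 < τcr := by rw [hτ]; positivity
  have hwτ : w₀ * τcr = Real.pi := by rw [hw]; field_simp
  have hw₀τ : w₀ ^ 2 * τcr = -2 * A := by
    rw [hw, hA, hτ]
    field_simp
  exact uniformDelayCharFun_I_mul_eq_zero hwτ hw₀τ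
end

section
/- Let D > 0 and k ≥ 2 an integer. Set β_c = D·cos^{k+1}(π/(2k))/sin(π/(2k)) and w₀ = D·cos^k(π/(2k)). Then λ = i·w₀ satisfies the characteristic equation i·w₀ + D·β_c^k/(β_c + i·w₀)^k = 0. -/
/-!
Put `θ = π/(2k)` and `r = D cos^k θ / sin θ`. Then `β_c = r cos θ` and `w₀ = r sin θ`, so
`β_c + i w₀ = r e^{iθ}` and, since `kθ = π/2`, `(β_c + i w₀)^k = i r^k`. Hence
`D β_c^k / (β_c + i w₀)^k = -i D cos^k θ = -i w₀`.
-/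

open Complex

theorem exp_mul_I_pow_eq_I {k : ℕ} {θ : ℝ} (hkθ : k * θ = Real.pi / 2) :
    exp (θ * I) ^ k = I := by
  rw [← exp_nat_mul, ← mul_assoc, ← ofReal_natCast, ← ofReal_mul, hkθ]
  push_cast
  exact exp_pi_div_two_mul_I

theorem polar_pow_eq_I_mul {k : ℕ} {θ : ℝ} (hkθ : k * θ = Real.pi / 2) (r : ℝ) :
    ((r * Real.cos θ : ℝ) + I * (r * Real.sin θ : ℝ) : ℂ) ^ k = r ^ k * I := by
  have hpolar : ((r * Real.cos θ : ℝ) + I * (r * Real.sin θ : ℝ) : ℂ) = r * exp (θ * I) := by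
    rw [exp_mul_I]
    push_cast
    ring
  rw [hpolar, mul_pow, exp_mul_I_pow_eq_I hkθ]

theorem I_mul_add_div_polar_pow_eq_zero {k : ℕ} {θ D r : ℝ} (hkθ : k * θ = Real.pi / 2)
    (hr : r * Real.sin θ = D * Real.cos θ ^ k) :
    I * (r * Real.sin θ : ℝ) + D * ((r * Real.cos θ : ℝ) : ℂ) ^ k /
      ((r * Real.cos θ : ℝ) + I * (r * Real.sin θ : ℝ) : ℂ) ^ k = 0 := by
  rw [polar_pow_eq_I_mul hkθ]
  rcases eq_or_ne r 0 with rfl | hr0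
  · have hk : k ≠ 0 := by
      rintro rfl
      linarith [Real.pi_pos]
    simp [hk]
  · have hr0' : (r : ℂ) ^ k ≠ 0 := pow_ne_zero k (ofReal_ne_zero.mpr hr0)
    rw [hr]
    push_cast
    field_simp
    rw [mul_pow, I_sq]
    ring

theorem gamma_critical_root_general (D : ℝ) (k : ℕ) (hk : 2 ≤ k)
    (βc w₀ : ℝ)
    (hβc : βc = D * Real.cos (Real.pi / (2 * k)) ^ (k + 1) / Real.sin (Real.pi / (2 * k)))
    (hw : w₀ = D * Real.cos (Real.pi / (2 * k)) ^ k) :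
    Complex.I * w₀ + (D : ℂ) * (βc : ℂ) ^ k / ((βc : ℂ) + Complex.I * w₀) ^ k = 0 := by
  set θ := Real.pi / (2 * k)
  have hkθ : k * θ = Real.pi / 2 := by
    have : (k : ℝ) ≠ 0 := by positivity
    simp only [θ]
    field_simp
  have hsin : Real.sin θ ≠ 0 := by
    have hθ_lt : θ < Real.pi := by
      have : (1 : ℝ) < 2 * k := by norm_cast; omega
      exact div_lt_self Real.pi_pos this
    exact (Real.sin_pos_of_pos_of_lt_pi (by positivity) hθ_lt).ne'
  set r := D * Real.cos θ ^ k / Real.sin θ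
  have hr : r * Real.sin θ = D * Real.cos θ ^ k := div_mul_cancel₀ _ hsin
  have hβ : βc = r * Real.cos θ := by rw [hβc, pow_succ]; ring
  rw [hβ, hw, ← hr]
  exact I_mul_add_div_polar_pow_eq_zero hkθ hr

theorem gamma_critical_root (D : ℝ) (hD : 0 < D) (k : ℕ) (hk : 2 ≤ k)
    (βc w₀ : ℝ)
    (hβc : βc = D * Real.cos (Real.pi / (2 * k)) ^ (k + 1) / Real.sin (Real.pi / (2 * k)))
    (hw : w₀ = D * Real.cos (Real.pi / (2 * k)) ^ k) :
    Complex.I * w₀ + (D : ℂ) * (βc : ℂ) ^ k / ((βc : ℂ) + Complex.I * w₀) ^ k = 0 :=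
  gamma_critical_root_general D k hk βc w₀ hβc hw
end

section
/- Let δ > 0, γ > 0, and 0 < p ≤ 1/2. Then every root λ of the characteristic equation λ + pδγ·exp(-λτ) + (1-p)δγ = 0 has Re(λ) < 0, for every τ ≥ 0. -/
/-!
If `Re λ ≥ 0` then `‖exp (-λτ)‖ ≤ 1`, so the equation gives `‖λ + a‖ = |b| ‖exp (-λτ)‖ ≤ |b| ≤ a`,
while `‖λ + a‖ ≥ Re λ + a ≥ a`. Equality throughout pins `λ` to `0`, which is a root only when
`a + b = 0`.
-/

open Complex

lemma Complex.norm_exp_neg_mul_ofReal_le_one {z : ℂ} {τ : ℝ} (hz : 0 ≤ z.re) (hτ : 0 ≤ τ) :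
    ‖exp (-z * τ)‖ ≤ 1 := by
  rw [norm_exp, Real.exp_le_one_iff]
  simpa [mul_re] using mul_nonneg hz hτ

lemma Complex.eq_zero_of_nonneg_re_of_norm_add_ofReal_le {z : ℂ} {a : ℝ} (hz : 0 ≤ z.re)
    (h : ‖z + a‖ ≤ a) : z = 0 := by
  have ha : 0 ≤ a := (norm_nonneg _).trans h
  have hsq : (z.re + a) ^ 2 + z.im ^ 2 ≤ a ^ 2 := by
    have := pow_le_pow_left₀ (norm_nonneg _) h 2
    rwa [Complex.sq_norm, normSq_apply, add_re, add_im, ofReal_re, ofReal_im, add_zero, ← sq,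
      ← sq] at this
  apply ext <;> simp only [zero_re, zero_im] <;> nlinarith

theorem Complex.re_neg_of_add_mul_exp_add_eq_zero {a b τ : ℝ} {z : ℂ} (hab : |b| ≤ a)
    (hpos : 0 < a + b) (hτ : 0 ≤ τ) (h : z + b * exp (-z * τ) + a = 0) : z.re < 0 := by
  by_contra! hz
  have hnorm : ‖z + a‖ ≤ a := calc
    ‖z + a‖ = |b| * ‖exp (-z * τ)‖ := by
      rw [show z + a = -(b * exp (-z * τ)) by linear_combination h, norm_neg, norm_mul, norm_real,
        Real.norm_eq_abs]
    _ ≤ |b| * 1 := by gcongr; exact norm_exp_neg_mul_ofReal_le_one hz hτ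
    _ = |b| := mul_one _
    _ ≤ a := hab
  obtain rfl := eq_zero_of_nonneg_re_of_norm_add_ofReal_le hz hnorm
  simp only [neg_zero, zero_mul, exp_zero, mul_one, zero_add] at h
  norm_cast at h
  linarith

theorem discrete_delay_stable_general (δ γ p τ : ℝ) (hδ : 0 < δ) (hγ : 0 < γ)
    (hp : p ≤ 1 / 2) (hτ : 0 ≤ τ) (lam : ℂ)
    (h : lam + (p * δ * γ : ℝ) * Complex.exp (-lam * τ) + ((1 - p) * δ * γ : ℝ) = 0) :
    lam.re < 0 := by
  have hδγ : 0 < δ * γ := mul_pos hδ hγ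
  refine re_neg_of_add_mul_exp_add_eq_zero ?_ (by nlinarith) hτ h
  exact abs_le.mpr ⟨by nlinarith, by nlinarith⟩

theorem discrete_delay_stable (δ γ p τ : ℝ) (hδ : 0 < δ) (hγ : 0 < γ)
    (hp0 : 0 < p) (hp : p ≤ 1 / 2) (hτ : 0 ≤ τ) (lam : ℂ)
    (h : lam + (p * δ * γ : ℝ) * Complex.exp (-lam * τ) + ((1 - p) * δ * γ : ℝ) = 0) :
    lam.re < 0 :=
  discrete_delay_stable_general δ γ p τ hδ hγ hp hτ lam h
end

section
/- Let δ > 0, γ > 0, τ > 0, and p ∈ (0,1]. If λ = u + i·v with u > 0 and v > 0 is a root of λ + pδγ·e^{-λτ} + (1-p)δγ = 0, then p > 1/2. -/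
open Complex

theorem re_add_le_abs_mul_exp_of_delay_root {z : ℂ} {a b τ : ℝ}
    (h : z + a * exp (-z * τ) + b = 0) : z.re + b ≤ |a| * Real.exp (-z.re * τ) := by
  have hroot : z + b = -(a * exp (-z * τ)) := by linear_combination h
  calc z.re + b = (z + b).re := by simp
    _ ≤ ‖z + b‖ := re_le_norm _
    _ = |a| * Real.exp (-z.re * τ) := by
      rw [hroot, norm_neg, norm_mul, norm_real, Real.norm_eq_abs, norm_exp]
      simp

theorem lt_abs_of_delay_root_of_re_pos {z : ℂ} {a b τ : ℝ}
    (h : z + a * exp (-z * τ) + b = 0) (hz : 0 < z.re) (hτ : 0 ≤ τ) : b < |a| := by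
  have hexp : Real.exp (-z.re * τ) ≤ 1 :=
    Real.exp_le_one_iff.mpr (by nlinarith)
  have := re_add_le_abs_mul_exp_of_delay_root h
  nlinarith [abs_nonneg a]

theorem one_half_lt_of_one_sub_lt_abs {p : ℝ} (h : 1 - p < |p|) : 1 / 2 < p := by
  cases abs_cases p <;> linarith

theorem unstable_root_forces_p_large_general (δ γ τ p u v : ℝ) (hδ : 0 < δ) (hγ : 0 < γ)
    (hτ : 0 < τ) (hu : 0 < u)
    (h : ((u : ℂ) + v * Complex.I) +
        (p * δ * γ : ℝ) * Complex.exp (-((u : ℂ) + v * Complex.I) * τ) +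
        ((1 - p) * δ * γ : ℝ) = 0) :
    1 / 2 < p := by
  have hD : 0 < δ * γ := mul_pos hδ hγ
  have hb := lt_abs_of_delay_root_of_re_pos h (by simpa using hu) hτ.le
  rw [mul_assoc, mul_assoc, abs_mul, abs_of_pos hD] at hb
  exact one_half_lt_of_one_sub_lt_abs (lt_of_mul_lt_mul_right hb hD.le)

theorem unstable_root_forces_p_large (δ γ τ p u v : ℝ) (hδ : 0 < δ) (hγ : 0 < γ)
    (hτ : 0 < τ) (hp0 : 0 < p) (hp1 : p ≤ 1) (hu : 0 < u) (hv : 0 < v)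
    (h : ((u : ℂ) + v * Complex.I) +
        (p * δ * γ : ℝ) * Complex.exp (-((u : ℂ) + v * Complex.I) * τ) +
        ((1 - p) * δ * γ : ℝ) = 0) :
    1 / 2 < p :=
  unstable_root_forces_p_large_general δ γ τ p u v hδ hγ hτ hu h
end

section
/- Let D > 0 and p ∈ (1/2, 1]. Set w₀ = D·√(2p-1) and τ_cr = arccos(-(1-p)/p)/(D·√(2p-1)). Then λ = i·w₀ is a root of the characteristic equation λ + pD·e^{-λτ_cr} + (1-p)D = 0. -/
/-! At `λ = i w₀` the real and imaginary parts of the equation read `p D cos (w₀ τ) = -(1 - p) D`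
and `p D sin (w₀ τ) = w₀`. Since `w₀ τ_cr = arccos (-(1 - p) / p)`, the first holds, and
`sin (arccos c) = √(1 - c²) = √(2p - 1) / p` gives the second. -/

open Complex in
theorem I_mul_add_mul_exp_add_eq_zero_iff (a b w τ : ℝ) :
    I * w + (a : ℂ) * exp (-(I * w) * τ) + (b : ℂ) = 0 ↔
      a * Real.cos (w * τ) + b = 0 ∧ w = a * Real.sin (w * τ) := by
  have hexp : exp (-(I * w) * τ) = Real.cos (w * τ) - Real.sin (w * τ) * I := by
    rw [show -(I * w) * τ = ((-(w * τ) : ℝ) : ℂ) * I by push_cast; ring, exp_mul_I,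
      ← ofReal_cos, ← ofReal_sin, Real.cos_neg, Real.sin_neg]
    push_cast; ring
  rw [hexp, Complex.ext_iff]
  simp only [add_re, add_im, mul_re, mul_im, sub_re, sub_im, I_re, I_im, ofReal_re, ofReal_im,
    zero_re, zero_im]
  constructor <;> rintro ⟨h₁, h₂⟩ <;> constructor <;> linarith

theorem Real.sin_arccos_neg_one_sub_div {p : ℝ} (hp : 0 < p) :
    Real.sin (Real.arccos (-(1 - p) / p)) = Real.sqrt (2 * p - 1) / p := by
  have hsq : 1 - (-(1 - p) / p) ^ 2 = (2 * p - 1) / p ^ 2 := by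
    field_simp; ring
  rw [Real.sin_arccos, hsq, Real.sqrt_div' _ (sq_nonneg p), Real.sqrt_sq hp.le]

theorem discrete_delay_critical_root_general (D p : ℝ) (hD : 0 < D) (hp : 1 / 2 < p)
    (w₀ τcr : ℝ) (hw : w₀ = D * Real.sqrt (2 * p - 1))
    (hτ : τcr = Real.arccos (-(1 - p) / p) / (D * Real.sqrt (2 * p - 1))) :
    Complex.I * w₀ + (p * D : ℝ) * Complex.exp (-(Complex.I * w₀) * τcr) +
      ((1 - p) * D : ℝ) = 0 := by
  have hp0 : 0 < p := by linarith
  have hsqrt : 0 < Real.sqrt (2 * p - 1) := Real.sqrt_pos.mpr (by linarith)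
  have hphase : w₀ * τcr = Real.arccos (-(1 - p) / p) := by
    rw [hw, hτ, mul_div_cancel₀ _ (by positivity)]
  have hcos : Real.cos (w₀ * τcr) = -(1 - p) / p := by
    rw [hphase, Real.cos_arccos (by rw [le_div_iff₀ hp0]; linarith)
      (by rw [div_le_one hp0]; linarith)]
  rw [I_mul_add_mul_exp_add_eq_zero_iff, hcos, hphase, Real.sin_arccos_neg_one_sub_div hp0, hw]
  constructor <;> field_simp; ring

theorem discrete_delay_critical_root (D p : ℝ) (hD : 0 < D) (hp : 1 / 2 < p) (hp1 : p ≤ 1)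
    (w₀ τcr : ℝ) (hw : w₀ = D * Real.sqrt (2 * p - 1))
    (hτ : τcr = Real.arccos (-(1 - p) / p) / (D * Real.sqrt (2 * p - 1))) :
    Complex.I * w₀ + (p * D : ℝ) * Complex.exp (-(Complex.I * w₀) * τcr) +
      ((1 - p) * D : ℝ) = 0 :=
  discrete_delay_critical_root_general D p hD hp w₀ τcr hw hτ
end

section
/- For D > 0 and p ∈ (1/2, 1], the critical delay τ_cr(p) = arccos(-(1-p)/p)/(D√(2p-1)) satisfies τ_cr(p) ≥ π/(2D), with equality if and only if p = 1. -/
/-!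
For `p ∈ (1/2, 1]` the argument `-(1 - p)/p` of `arccos` is nonpositive, so the numerator is at
least `π/2`, while the denominator factor `√(2p - 1)` lies in `(0, 1]`. Dividing something at
least `π/2` by a number in `(0, 1]` gives at least `π/2`, with equality only if the divisor is `1`,
that is `p = 1`.
-/

open Real

lemma Real.pi_div_two_le_arccos_iff {x : ℝ} : π / 2 ≤ arccos x ↔ x ≤ 0 := by
  simpa only [not_lt] using arccos_lt_pi_div_two.not

lemma le_div_of_le_of_le_one {a b s : ℝ} (ha : 0 ≤ a) (hab : a ≤ b) (hs : 0 < s) (hs1 : s ≤ 1) :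
    a ≤ b / s :=
  hab.trans (le_div_self (ha.trans hab) hs hs1)

lemma div_eq_iff_of_le_of_le_one {a b s : ℝ} (ha : 0 < a) (hab : a ≤ b) (hs : 0 < s)
    (hs1 : s ≤ 1) : b / s = a ↔ b = a ∧ s = 1 := by
  constructor
  · intro h
    have hb : b = a * s := by rw [← h, div_mul_cancel₀ b hs.ne']
    have hs_eq : s = 1 := by nlinarith
    exact ⟨by rw [hb, hs_eq, mul_one], hs_eq⟩
  · rintro ⟨rfl, rfl⟩
    exact div_one b

theorem discrete_delay_critical_delay_ge (D p : ℝ) (hD : 0 < D)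
    (hp : 1 / 2 < p) (hp1 : p ≤ 1) :
    Real.pi / (2 * D) ≤ Real.arccos (-(1 - p) / p) / (D * Real.sqrt (2 * p - 1)) ∧
      (Real.arccos (-(1 - p) / p) / (D * Real.sqrt (2 * p - 1)) = Real.pi / (2 * D) ↔
        p = 1) := by
  set A := arccos (-(1 - p) / p)
  set s := √(2 * p - 1)
  have hA : π / 2 ≤ A :=
    pi_div_two_le_arccos_iff.mpr (div_nonpos_of_nonpos_of_nonneg (by linarith) (by linarith))
  have hs : 0 < s := sqrt_pos.mpr (by linarith)
  have hs1 : s ≤ 1 := sqrt_le_one.mpr (by linarith)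
  have hs_eq : s = 1 ↔ p = 1 := by
    rw [sqrt_eq_one]
    constructor <;> intro h <;> linarith
  have hπ : 0 < π / 2 := by positivity
  rw [← div_div, mul_comm D s, ← div_div, div_le_div_iff_of_pos_right hD,
    div_left_inj' hD.ne', div_eq_iff_of_le_of_le_one hπ hA hs hs1]
  refine ⟨le_div_of_le_of_le_one hπ.le hA hs hs1, ⟨fun h => hs_eq.mp h.2, fun h => ?_⟩⟩
  subst h
  norm_num [A, s]
end
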